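/- arXiv:1402.7269 — 3 statements merged into one kernel-verified Lean document; each statement's English description precedes it below -/
import Mathlib

section
/- Let f : [0,∞) → ℂ belong to the class V_bC_g, let μ_f be the complex Borel measure on [0,∞) with μ_f([0,x)) = f(x) and finite total variation, and let g : [0,∞) → ℂ be of class C¹ on [0,∞) with g' ∈ L¹([0,∞)). Then ∫_{[0,∞)} g dμ_f = lim_{x→∞} f(x)g(x) − ∫₀^∞ f(t) g'(t) dt (the limit lim_{x→∞} f(x)g(x) existing and being equal to μ_{fg}([0,∞)), where μ_{fg} is the complex Borel measure with μ_{fg}([0,x)) = f(x)g(x)). -/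
open MeasureTheory Set Filter

/-- The class `V_bC_g` of functions `f : [0,∞) → ℂ` of bounded variation on `[0,∞)`,
left-continuous at every point of `[0,∞)`, and vanishing at `0`. -/
def VbCg (f : ℝ → ℂ) : Prop :=
  eVariationOn f (Set.Ici 0) ≠ ⊤ ∧
    (∀ x : ℝ, 0 ≤ x → ContinuousWithinAt f (Set.Iic x) x) ∧ f 0 = 0

/-! With `H = ∫_{[0,∞)} h dν`, the tail `∫_{[s,∞)} h dν` equals `H - f s`, while
`g t - g 0 = ∫_{(0,t]} g'`. Fubini on the region `{s ≤ t}` of `(0,∞) × [0,∞)`, for the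
integrable kernel `g' s · h t`, turns `∫ (g - g 0) h dν` into `∫ g' (H - f)`; both `f` and `g`
converge at infinity, and rearranging gives the formula with `L = H · lim g`. -/

open Topology

section Fubini

variable {α : Type*} [LinearOrder α] [TopologicalSpace α] [OrderClosedTopology α]
  [MeasurableSpace α] [OpensMeasurableSpace α] {μ ν : Measure α} {φ h : α → ℂ}

theorem integral_indicator_le_mul_left (s : α) :
    ∫ t, {p : α × α | p.1 ≤ p.2}.indicator (fun p => φ p.1 * h p.2) (s, t) ∂ν
      = φ s * ∫ t in Ici s, h t ∂ν := by
  rw [← integral_const_mul, ← integral_indicator measurableSet_Ici]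
  rfl

theorem integral_indicator_le_mul_right (t : α) :
    ∫ s, {p : α × α | p.1 ≤ p.2}.indicator (fun p => φ p.1 * h p.2) (s, t) ∂μ
      = (∫ s in Iic t, φ s ∂μ) * h t := by
  rw [← integral_mul_const, ← integral_indicator measurableSet_Iic]
  rfl

theorem setIntegral_Ici_eq_sub {a s : α} (hh : IntegrableOn h (Ici a) ν) (has : a ≤ s) :
    ∫ t in Ici s, h t ∂ν = ∫ t in Ici a, h t ∂ν - ∫ t in Ico a s, h t ∂ν := by
  rw [← Ico_union_Ici_eq_Ici has, setIntegral_union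
    ((Iio_disjoint_Ici le_rfl).mono_left Ico_subset_Iio_self) measurableSet_Ici
    (hh.mono_set Ico_subset_Ici_self) (hh.mono_set (Ici_subset_Ici.2 has))]
  ring

variable [SecondCountableTopology α]

theorem integrable_indicator_le_mul_prod (hφ : Integrable φ μ) (hh : Integrable h ν) :
    Integrable ({p : α × α | p.1 ≤ p.2}.indicator fun p => φ p.1 * h p.2) (μ.prod ν) :=
  (hφ.mul_prod hh).indicator (measurableSet_le measurable_fst measurable_snd)

variable [SFinite ν]

theorem integrable_mul_integral_Ici (hφ : Integrable φ μ) (hh : Integrable h ν) :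
    Integrable (fun s => φ s * ∫ t in Ici s, h t ∂ν) μ := by
  simpa only [integral_indicator_le_mul_left] using
    (integrable_indicator_le_mul_prod hφ hh).integral_prod_left

theorem integrable_integral_Iic_mul [SFinite μ] (hφ : Integrable φ μ) (hh : Integrable h ν) :
    Integrable (fun t => (∫ s in Iic t, φ s ∂μ) * h t) ν := by
  simpa only [integral_indicator_le_mul_right] using
    (integrable_indicator_le_mul_prod hφ hh).integral_prod_right

theorem integral_mul_integral_Ici_eq [SFinite μ] (hφ : Integrable φ μ) (hh : Integrable h ν) :
    ∫ s, φ s * (∫ t in Ici s, h t ∂ν) ∂μ = ∫ t, (∫ s in Iic t, φ s ∂μ) * h t ∂ν := by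
  simpa only [integral_indicator_le_mul_left, integral_indicator_le_mul_right] using
    integral_integral_swap (f := fun s t => {p : α × α | p.1 ≤ p.2}.indicator
      (fun p => φ p.1 * h p.2) (s, t)) (integrable_indicator_le_mul_prod hφ hh)

end Fubini

section HalfLine

variable {ν : Measure ℝ} {h φ F G : ℝ → ℂ} {a : ℝ}

theorem tendsto_setIntegral_Ico_atTop (hh : IntegrableOn h (Ici a) ν) :
    Tendsto (fun x => ∫ t in Ico a x, h t ∂ν) atTop (𝓝 (∫ t in Ici a, h t ∂ν)) := by
  rw [← iUnion_Ico_right a] at hh ⊢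
  exact tendsto_setIntegral_of_monotone (fun _ => measurableSet_Ico)
    (fun _ _ hxy => Ico_subset_Ico_right hxy) hh

theorem eq_add_integral_Ioc_of_hasDerivWithinAt_Ici
    (hderiv : ∀ x ∈ Ici a, HasDerivWithinAt G (φ x) (Ici a) x) (hφ : IntegrableOn φ (Ici a))
    {x : ℝ} (hx : a ≤ x) : G x = G a + ∫ s in Ioc a x, φ s := by
  rw [← intervalIntegral.integral_of_le hx, intervalIntegral.integral_eq_sub_of_hasDerivAt_of_le hx
    (fun y hy => (hderiv y hy.1).continuousWithinAt.mono Icc_subset_Ici_self)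
    (fun y hy => (hderiv y hy.1.le).hasDerivAt (Ici_mem_nhds hy.1))
    ((hφ.mono_set fun y hy => ?_).intervalIntegrable)]
  · ring
  · rw [uIcc_of_le hx] at hy
    exact hy.1

theorem tendsto_atTop_of_eq_add_integral_Ioc (hφ : IntegrableOn φ (Ioi a))
    (hG : ∀ x, a ≤ x → G x = G a + ∫ s in Ioc a x, φ s) :
    Tendsto G atTop (𝓝 (G a + ∫ s in Ioi a, φ s)) := by
  refine (tendsto_const_nhds.add (intervalIntegral_tendsto_integral_Ioi a hφ tendsto_id)).congr' ?_
  filter_upwards [eventually_ge_atTop a] with x hx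
  rw [id, intervalIntegral.integral_of_le hx, hG x hx]

theorem integral_Ici_mul_eq_sub [SFinite ν] (hh : IntegrableOn h (Ici a) ν)
    (hφ : IntegrableOn φ (Ioi a)) (hF : ∀ x, a ≤ x → ∫ t in Ico a x, h t ∂ν = F x)
    (hG : ∀ x, a ≤ x → G x = G a + ∫ s in Ioc a x, φ s) :
    ∫ t in Ici a, G t * h t ∂ν
      = (∫ t in Ici a, h t ∂ν) * (G a + ∫ s in Ioi a, φ s) - ∫ t in Ioi a, F t * φ t := by
  set H := ∫ t in Ici a, h t ∂ν
  have htail : ∀ s ∈ Ioi a, ∫ t in Ici s, h t ∂ν.restrict (Ici a) = H - F s := fun s hs => by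
    rw [Measure.restrict_restrict measurableSet_Ici, inter_eq_left.2 (Ici_subset_Ici.2 hs.le),
      setIntegral_Ici_eq_sub hh hs.le, ← hF s hs.le]
  have hprim : ∀ t ∈ Ici a, ∫ s in Iic t, φ s ∂volume.restrict (Ioi a) = G t - G a := fun t ht => by
    rw [Measure.restrict_restrict measurableSet_Iic, inter_comm, Ioi_inter_Iic, hG t ht]
    ring
  have hfub := integral_mul_integral_Ici_eq hφ hh
  rw [setIntegral_congr_fun measurableSet_Ioi fun s hs => by rw [htail s hs],
    setIntegral_congr_fun measurableSet_Ici fun t ht => by rw [hprim t ht]] at hfub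
  have hL : IntegrableOn (fun s => φ s * (H - F s)) (Ioi a) :=
    (integrable_mul_integral_Ici hφ hh).congr
      ((ae_restrict_mem measurableSet_Ioi).mono fun s hs => by dsimp only; rw [htail s hs])
  have hR : IntegrableOn (fun t => (G t - G a) * h t) (Ici a) ν :=
    (integrable_integral_Iic_mul hφ hh).congr
      ((ae_restrict_mem measurableSet_Ici).mono fun t ht => by dsimp only; rw [hprim t ht])
  calc ∫ t in Ici a, G t * h t ∂ν
      = ∫ t in Ici a, ((G t - G a) * h t + G a * h t) ∂ν := by congr! 2; ring
    _ = (∫ s in Ioi a, φ s * (H - F s)) + G a * H := by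
      rw [integral_add hR (hh.const_mul _), integral_const_mul, hfub]
    _ = H * (G a + ∫ s in Ioi a, φ s) - ∫ t in Ioi a, F t * φ t := by
      rw [show (fun t => F t * φ t) = fun s => φ s * H - φ s * (H - F s) by ext; ring,
        integral_sub (hφ.mul_const H) hL, integral_mul_const]
      ring

end HalfLine

theorem stmt6_general (f : ℝ → ℂ)
    (ν : MeasureTheory.Measure ℝ) [MeasureTheory.IsFiniteMeasure ν]
    (h : ℝ → ℂ) (hh_meas : Measurable h) (hh_norm : ∀ x : ℝ, ‖h x‖ = 1)
    (hrep : ∀ x : ℝ, 0 ≤ x → (∫ t in Set.Ico 0 x, h t ∂ν) = f x)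
    (g g' : ℝ → ℂ)
    (hderiv : ∀ x ∈ Set.Ici (0 : ℝ), HasDerivWithinAt g (g' x) (Set.Ici 0) x)
    (hint : MeasureTheory.IntegrableOn g' (Set.Ici 0)) :
    ∃ L : ℂ, Filter.Tendsto (fun x => f x * g x) Filter.atTop (nhds L) ∧
      (∫ x in Set.Ici (0 : ℝ), g x * h x ∂ν) = L - ∫ t in Set.Ici (0 : ℝ), f t * g' t := by
  have hh : IntegrableOn h (Ici 0) ν := (Integrable.of_bound hh_meas.aestronglyMeasurable 1
    (.of_forall fun x => (hh_norm x).le)).integrableOn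
  have hG : ∀ x, 0 ≤ x → g x = g 0 + ∫ s in Ioc 0 x, g' s := fun x hx =>
    eq_add_integral_Ioc_of_hasDerivWithinAt_Ici hderiv hint hx
  have hg' : IntegrableOn g' (Ioi 0) := hint.mono_set Ioi_subset_Ici_self
  have hf_lim : Tendsto f atTop (𝓝 (∫ t in Ici 0, h t ∂ν)) :=
    (tendsto_setIntegral_Ico_atTop hh).congr' <| (eventually_ge_atTop 0).mono hrep
  refine ⟨_, hf_lim.mul (tendsto_atTop_of_eq_add_integral_Ioc hg' hG), ?_⟩
  rw [integral_Ici_eq_integral_Ioi (μ := volume)]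
  exact integral_Ici_mul_eq_sub hh hg' hrep hG

/-- Let `f ∈ V_bC_g` and let `μ_f` be the complex Borel measure on `[0,∞)`
with `μ_f([0,x)) = f x` and finite total variation; by Radon–Nikodym it is represented as
`dμ_f = h dν` with `ν = |μ_f|` a finite positive Borel measure carried by `[0,∞)` and `‖h‖ ≡ 1`.
Let `g : [0,∞) → ℂ` be of class `C¹` on `[0,∞)` with `g'` integrable on `[0,∞)`.  Then the
limit `L = lim_{x→∞} f(x) g(x)` exists (it equals `μ_{fg}([0,∞))`) and
`∫_{[0,∞)} g dμ_f = lim_{x→∞} f(x)g(x) − ∫_{[0,∞)} f(t) g'(t) dt`. -/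
theorem stmt6 (f : ℝ → ℂ) (hf : VbCg f)
    (ν : MeasureTheory.Measure ℝ) [MeasureTheory.IsFiniteMeasure ν]
    (hνsupp : ν (Set.Iio 0) = 0)
    (h : ℝ → ℂ) (hh_meas : Measurable h) (hh_norm : ∀ x : ℝ, ‖h x‖ = 1)
    (hrep : ∀ x : ℝ, 0 ≤ x → (∫ t in Set.Ico 0 x, h t ∂ν) = f x)
    (g g' : ℝ → ℂ)
    (hderiv : ∀ x ∈ Set.Ici (0 : ℝ), HasDerivWithinAt g (g' x) (Set.Ici 0) x)
    (hcont : ContinuousOn g' (Set.Ici 0))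
    (hint : MeasureTheory.IntegrableOn g' (Set.Ici 0)) :
    ∃ L : ℂ, Filter.Tendsto (fun x => f x * g x) Filter.atTop (nhds L) ∧
      (∫ x in Set.Ici (0 : ℝ), g x * h x ∂ν) = L - ∫ t in Set.Ici (0 : ℝ), f t * g' t :=
  stmt6_general f ν h hh_meas hh_norm hrep g g' hderiv hint
end

section
/- Let ρ belong to the class V_bC_g* and define L_ρ(s) = ∫₀^∞ ρ(x)e^{−sx} dx for Re s > 0. Suppose L_ρ is holomorphic on {Re s > 0} and admits an analytic continuation to an open neighborhood of {Re s ≥ 0} that is holomorphic except for a simple pole at s = 0 with residue r. Then lim_{x→+∞} ρ(x) = r. -/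
open MeasureTheory Set Filter

/-- The class `V_bC_g*` of real-valued functions `ρ : [0,∞) → ℝ` of bounded variation on
`[0,∞)`, left-continuous at every point of `[0,∞)`, and vanishing at `0`. -/
def VbCgStar (ρ : ℝ → ℝ) : Prop :=
  eVariationOn ρ (Set.Ici 0) ≠ ⊤ ∧
    (∀ x : ℝ, 0 ≤ x → ContinuousWithinAt ρ (Set.Iic x) x) ∧ ρ 0 = 0

/-! A function of bounded variation on `[0, ∞)` has a limit `L` at infinity. Substituting
`x = u / s` writes `s · L_ρ(s)` as `∫₀^∞ ρ(u / s) e^{-u} du`, which tends to `L` as `s → 0⁺` by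
dominated convergence. On the other hand `s · L_ρ(s) = G(s) → G(0) = r`, so `L = r`. -/

open Topology

theorem LocallyBoundedVariationOn.aemeasurable_restrict {α : Type*} [LinearOrder α]
    [TopologicalSpace α] [OrderClosedTopology α] [MeasurableSpace α] [BorelSpace α]
    {μ : Measure α} {f : α → ℝ} {s : Set α} (hf : LocallyBoundedVariationOn f s)
    (hs : MeasurableSet s) : AEMeasurable f (μ.restrict s) := by
  obtain ⟨p, q, hp, hq, rfl⟩ := hf.exists_monotoneOn_sub_monotoneOn
  exact (aemeasurable_restrict_of_monotoneOn hs hp).sub (aemeasurable_restrict_of_monotoneOn hs hq)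

theorem ofReal_mul_integral_mul_cexp_neg_mul_Ioi (f : ℝ → ℂ) {s : ℝ} (hs : 0 < s) :
    (s : ℂ) * ∫ x in Ioi 0, f x * Complex.exp (-s * x) =
      ∫ u in Ioi 0, f (s⁻¹ * u) * Complex.exp (-u) := by
  have h := integral_comp_mul_left_Ioi (fun x => f x * Complex.exp (-s * x)) 0 (inv_pos.2 hs)
  rw [mul_zero, inv_inv, Complex.real_smul] at h
  rw [← h]
  refine setIntegral_congr_fun measurableSet_Ioi fun u _ => ?_
  have hs' : (s : ℂ) ≠ 0 := Complex.ofReal_ne_zero.2 hs.ne'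
  push_cast
  field_simp

theorem integral_mul_cexp_neg_Ioi_zero (c : ℂ) :
    ∫ u in Ioi (0 : ℝ), c * Complex.exp (-u) = c := by
  have h := integral_exp_mul_complex_Ioi (a := -1) (by simp) 0
  simp only [neg_mul, one_mul, Complex.ofReal_zero, mul_zero, Complex.exp_zero] at h
  rw [integral_const_mul, h]
  simp

theorem tendsto_ofReal_mul_integral_mul_cexp_neg_mul_Ioi {f : ℝ → ℂ} {L : ℂ} {M : ℝ}
    (hf : AEStronglyMeasurable f (volume.restrict (Ioi 0)))
    (hM : ∀ x ∈ Ioi (0 : ℝ), ‖f x‖ ≤ M) (hL : Tendsto f atTop (𝓝 L)) :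
    Tendsto (fun s : ℝ => (s : ℂ) * ∫ x in Ioi 0, f x * Complex.exp (-s * x))
      (𝓝[>] 0) (𝓝 L) := by
  have hrescale : (fun s : ℝ => ∫ u in Ioi 0, f (s⁻¹ * u) * Complex.exp (-u))
      =ᶠ[𝓝[>] 0] fun s : ℝ => (s : ℂ) * ∫ x in Ioi 0, f x * Complex.exp (-s * x) :=
    eventually_mem_nhdsWithin.mono fun s hs =>
      (ofReal_mul_integral_mul_cexp_neg_mul_Ioi f hs).symm
  refine Tendsto.congr' hrescale ?_
  nth_rewrite 1 [← integral_mul_cexp_neg_Ioi_zero L]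
  refine tendsto_integral_filter_of_dominated_convergence (fun u => M * Real.exp (-u))
    ?_ ?_ ?_ ?_
  · filter_upwards [self_mem_nhdsWithin] with s (hs : 0 < s)
    have hscale := (Measure.quasiMeasurePreserving_smul volume (inv_ne_zero hs.ne')).restrict
      (fun u (hu : u ∈ Ioi (0 : ℝ)) => smul_pos (inv_pos.2 hs) hu)
    have hexp : Continuous fun u : ℝ => Complex.exp (-u) := by fun_prop
    exact (hf.comp_quasiMeasurePreserving hscale).mul hexp.aestronglyMeasurable
  · filter_upwards [self_mem_nhdsWithin] with s (hs : 0 < s)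
    rw [ae_restrict_iff' measurableSet_Ioi]
    refine ae_of_all _ fun u (hu : 0 < u) => ?_
    rw [norm_mul, ← Complex.ofReal_neg, Complex.norm_exp_ofReal]
    gcongr
    exact hM _ (mul_pos (inv_pos.2 hs) hu)
  · exact (integrableOn_exp_neg_Ioi 0).const_mul M
  · rw [ae_restrict_iff' measurableSet_Ioi]
    refine ae_of_all _ fun u (hu : 0 < u) => ?_
    exact (hL.comp (tendsto_inv_nhdsGT_zero.atTop_mul_const hu)).mul_const _

theorem stmt9_general (ρ : ℝ → ℝ) (hρ : VbCgStar ρ)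
    (U : Set ℂ) (hU : IsOpen U) (hUc : {s : ℂ | 0 ≤ s.re} ⊆ U)
    (F G : ℂ → ℂ)
    (hFeq : ∀ s : ℂ, 0 < s.re →
      F s = ∫ x in Set.Ici (0 : ℝ), (ρ x : ℂ) * Complex.exp (-s * x))
    (hG : DifferentiableOn ℂ G U)
    (hGF : ∀ s ∈ U \ {(0 : ℂ)}, G s = s * F s)
    (r : ℂ) (hres : G 0 = r) :
    Filter.Tendsto (fun x : ℝ => (ρ x : ℂ)) Filter.atTop (nhds r) := by
  obtain ⟨hvar, -, hρ0⟩ := hρ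
  have hbv : BoundedVariationOn ρ (Ici 0) := hvar
  obtain ⟨L, hρL⟩ : ∃ L, Tendsto ρ atTop (𝓝 L) := by
    simpa [inf_eq_right.2 (le_principal_iff.2 (Ici_mem_atTop (0 : ℝ)))]
      using hbv.exists_tendsto_atTop
  replace hρL := (Complex.continuous_ofReal.tendsto L).comp hρL
  have hbound : ∀ x ∈ Ioi (0 : ℝ), ‖(ρ x : ℂ)‖ ≤ (eVariationOn ρ (Ici 0)).toReal :=
    fun x hx => by simpa [Real.dist_eq, hρ0] using hbv.dist_le (mem_Ici.2 hx.le) self_mem_Ici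
  have hmeas : AEStronglyMeasurable (fun x => (ρ x : ℂ)) (volume.restrict (Ioi 0)) :=
    ((hbv.mono Ioi_subset_Ici_self).locallyBoundedVariationOn.aemeasurable_restrict
      measurableSet_Ioi).complex_ofReal.aestronglyMeasurable
  have hGL : Tendsto (fun s : ℝ => G s) (𝓝[>] 0) (𝓝 L) := by
    refine (tendsto_ofReal_mul_integral_mul_cexp_neg_mul_Ioi hmeas hbound hρL).congr' ?_
    filter_upwards [self_mem_nhdsWithin] with s (hs : 0 < s)
    have hsU : (s : ℂ) ∈ U \ {0} :=
      ⟨hUc (by simpa using hs.le), by simpa using hs.ne'⟩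
    rw [hGF _ hsU, hFeq _ (by simpa using hs), integral_Ici_eq_integral_Ioi]
  have hGr : Tendsto (fun s : ℝ => G s) (𝓝[>] 0) (𝓝 r) := by
    have hGc : ContinuousAt G 0 :=
      (hG.differentiableAt (hU.mem_nhds (hUc (by simp)))).continuousAt
    have hs0 : Tendsto (fun s : ℝ => (s : ℂ)) (𝓝[>] 0) (𝓝 0) :=
      (Complex.continuous_ofReal.tendsto' 0 0 Complex.ofReal_zero).mono_left nhdsWithin_le_nhds
    exact hres ▸ hGc.tendsto.comp hs0
  rwa [tendsto_nhds_unique hGL hGr] at hρL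

/-- **Tauberian theorem.** Let `ρ ∈ V_bC_g*` and define the Laplace transform
`L_ρ(s) = ∫₀^∞ ρ(x) e^{-sx} dx` for `Re s > 0`.  Suppose `L_ρ` is holomorphic on `{Re s > 0}`
and admits an analytic continuation `F` to an open neighborhood `U` of `{Re s ≥ 0}`,
holomorphic except for a simple pole at `s = 0` with residue `r` (i.e. `s ↦ s·F(s)` extends to
a holomorphic function `G` on `U` with `G 0 = r`).  Then `lim_{x→+∞} ρ(x) = r`. -/
theorem stmt9 (ρ : ℝ → ℝ) (hρ : VbCgStar ρ)
    (U : Set ℂ) (hU : IsOpen U) (hUc : {s : ℂ | 0 ≤ s.re} ⊆ U)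
    (hL : DifferentiableOn ℂ
      (fun s : ℂ => ∫ x in Set.Ici (0 : ℝ), (ρ x : ℂ) * Complex.exp (-s * x))
      {s : ℂ | 0 < s.re})
    (F G : ℂ → ℂ)
    (hF : DifferentiableOn ℂ F (U \ {0}))
    (hFeq : ∀ s : ℂ, 0 < s.re →
      F s = ∫ x in Set.Ici (0 : ℝ), (ρ x : ℂ) * Complex.exp (-s * x))
    (hG : DifferentiableOn ℂ G U)
    (hGF : ∀ s ∈ U \ {(0 : ℂ)}, G s = s * F s)
    (r : ℂ) (hres : G 0 = r) :
    Filter.Tendsto (fun x : ℝ => (ρ x : ℂ)) Filter.atTop (nhds r) :=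
  stmt9_general ρ hρ U hU hUc F G hFeq hG hGF r hres
end

section
/- Let α > 1 be real and define ρ(x) = ψ(eˣ)e^{−αx} for x ≥ 0, where ψ(x) = ∑_{n < x} Λ(n) is the Chebyshev function. Then for every complex s with Re s > 0, the Laplace transform L_ρ(s) = ∫₀^∞ ρ(x)e^{−sx} dx satisfies L_ρ(s) = −ζ'(s+α) / ((s+α)·ζ(s+α)). -/
/-!
Put `σ = s + α`. Since `ψ(eˣ) = ∑_{log n < x} Λ(n)`, the integrand `ρ(x) e^{-sx}` is the sum over
`n ≥ 1` of `Λ(n) e^{-σx}` restricted to `x > log n`. Each piece integrates to `Λ(n) n^{-σ} / σ`,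
and for `Re σ > 1` the integrals of the norms are summable, so integrating termwise gives
`L(Λ, σ) / σ = -ζ'(σ) / (σ ζ(σ))`.
-/

open MeasureTheory Set Filter

section ExpIntegrals

open Complex

lemma cexp_neg_mul_sub (σ : ℂ) (x a : ℝ) :
    cexp (-σ * (x - a)) = cexp (σ * a) * cexp (-σ * x) := by
  rw [← exp_add]
  ring_nf

variable {σ : ℂ} (hσ : 0 < σ.re) (a : ℝ)
include hσ

lemma integrableOn_cexp_neg_mul_sub_Ioi :
    IntegrableOn (fun x : ℝ => cexp (-σ * (x - a))) (Ioi a) := by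
  simp_rw [cexp_neg_mul_sub]
  exact (integrableOn_exp_mul_complex_Ioi (by simpa using hσ) a).const_mul _

lemma integral_cexp_neg_mul_sub_Ioi : ∫ x in Ioi a, cexp (-σ * (x - a)) = σ⁻¹ := by
  simp_rw [cexp_neg_mul_sub]
  rw [integral_const_mul, integral_exp_mul_complex_Ioi (by simpa using hσ), neg_div_neg_eq,
    mul_div_assoc', ← exp_add]
  simp [one_div]

end ExpIntegrals

lemma integral_rexp_neg_mul_sub_Ioi {b : ℝ} (hb : 0 < b) (a : ℝ) :
    ∫ x in Ioi a, Real.exp (-b * (x - a)) = b⁻¹ := by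
  rw [← Complex.ofReal_inj, ← integral_complex_ofReal]
  push_cast
  exact integral_cexp_neg_mul_sub_Ioi (σ := b) (by simpa using hb) a

lemma mem_Ico_one_ceil_exp {n : ℕ} {x : ℝ} :
    n ∈ Finset.Ico 1 ⌈Real.exp x⌉₊ ↔ n ≠ 0 ∧ Real.log n < x := by
  rw [Finset.mem_Ico, Nat.lt_ceil, Nat.one_le_iff_ne_zero]
  refine and_congr_right fun hn => ?_
  rw [Real.log_lt_iff_lt_exp (by positivity)]

namespace LSeries

/-- Equal to `f n e^{-σx}` on `x > log n` for `n ≠ 0`, and to `0` for `n = 0`; written via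
`term f σ n` so that its integral is `term f σ n / σ`. -/
noncomputable def laplaceTerm (f : ℕ → ℂ) (σ : ℂ) (n : ℕ) : ℝ → ℂ :=
  (Ioi (Real.log n)).indicator fun x => term f σ n * Complex.exp (-σ * (x - Real.log n))

variable {f : ℕ → ℂ} {σ : ℂ}

lemma laplaceTerm_of_mem {n : ℕ} {x : ℝ} (h : n ∈ Finset.Ico 1 ⌈Real.exp x⌉₊) :
    laplaceTerm f σ n x = f n * Complex.exp (-σ * x) := by
  obtain ⟨hn, hx⟩ := mem_Ico_one_ceil_exp.mp h
  have hcpow : (n : ℂ) ^ σ = Complex.exp (σ * Real.log n) := by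
    rw [Complex.cpow_def_of_ne_zero (by exact_mod_cast hn), Complex.natCast_log, mul_comm]
  rw [laplaceTerm, indicator_of_mem (mem_Ioi.mpr hx), term_of_ne_zero hn, hcpow,
    div_mul_eq_mul_div, div_eq_iff (Complex.exp_ne_zero _), mul_assoc, ← Complex.exp_add]
  ring_nf

lemma laplaceTerm_of_notMem {n : ℕ} {x : ℝ} (h : n ∉ Finset.Ico 1 ⌈Real.exp x⌉₊) :
    laplaceTerm f σ n x = 0 := by
  rw [mem_Ico_one_ceil_exp, not_and_or, not_not, not_lt] at h
  rcases h with rfl | hx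
  · simp [laplaceTerm]
  · exact indicator_of_notMem (notMem_Ioi.mpr hx) _

lemma tsum_laplaceTerm (x : ℝ) :
    ∑' n, laplaceTerm f σ n x =
      (∑ n ∈ Finset.Ico 1 ⌈Real.exp x⌉₊, f n) * Complex.exp (-σ * x) := by
  rw [tsum_eq_sum fun n => laplaceTerm_of_notMem, Finset.sum_mul]
  exact Finset.sum_congr rfl fun n => laplaceTerm_of_mem

lemma Ioi_log_natCast_subset_Ici (n : ℕ) : Ioi (Real.log n) ⊆ Ici 0 :=
  Ioi_subset_Ici (Real.log_natCast_nonneg n)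

variable (hσ : 0 < σ.re)
include hσ

lemma integrable_laplaceTerm (n : ℕ) :
    Integrable (laplaceTerm f σ n) (volume.restrict (Ici 0)) := by
  refine (IntegrableOn.integrable_indicator ?_ measurableSet_Ioi).restrict
  exact (integrableOn_cexp_neg_mul_sub_Ioi hσ _).const_mul _

lemma integral_laplaceTerm (n : ℕ) :
    ∫ x in Ici 0, laplaceTerm f σ n x = term f σ n / σ := by
  rw [laplaceTerm, setIntegral_indicator measurableSet_Ioi,
    inter_eq_self_of_subset_right (Ioi_log_natCast_subset_Ici n), integral_const_mul,
    integral_cexp_neg_mul_sub_Ioi hσ, div_eq_mul_inv]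

lemma integral_norm_laplaceTerm (n : ℕ) :
    ∫ x in Ici 0, ‖laplaceTerm f σ n x‖ = ‖term f σ n‖ / σ.re := by
  have hnorm (x : ℝ) : ‖laplaceTerm f σ n x‖ = (Ioi (Real.log n)).indicator
      (fun x => ‖term f σ n‖ * Real.exp (-σ.re * (x - Real.log n))) x := by
    rw [laplaceTerm, norm_indicator_eq_indicator_norm]
    congr! 2 with y
    rw [norm_mul, Complex.norm_exp, ← Complex.ofReal_sub, Complex.re_mul_ofReal, Complex.neg_re]
  simp_rw [hnorm]
  rw [setIntegral_indicator measurableSet_Ioi,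
    inter_eq_self_of_subset_right (Ioi_log_natCast_subset_Ici n), integral_const_mul,
    integral_rexp_neg_mul_sub_Ioi hσ, div_eq_mul_inv]

theorem integral_summatory_mul_cexp (hf : LSeriesSummable f σ) :
    ∫ x in Ici 0, (∑ n ∈ Finset.Ico 1 ⌈Real.exp x⌉₊, f n) * Complex.exp (-σ * x) =
      LSeries f σ / σ := by
  have hsum : Summable fun n => ∫ x in Ici 0, ‖laplaceTerm f σ n x‖ := by
    simpa only [integral_norm_laplaceTerm hσ] using hf.norm.div_const σ.re
  simp_rw [← tsum_laplaceTerm,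
    ← integral_tsum_of_summable_integral_norm (integrable_laplaceTerm hσ) hsum,
    integral_laplaceTerm hσ, tsum_div_const]
  rfl

end LSeries

/-- Let `α > 1` be real and define `ρ(x) = ψ(eˣ) e^{-αx}` for `x ≥ 0`, where
`ψ(x) = ∑_{1 ≤ n < x} Λ(n)` is the (left-continuous) Chebyshev summatory function of the von
Mangoldt function `Λ`.  Then for every complex `s` with `Re s > 0`, the Laplace transform
`L_ρ(s) = ∫₀^∞ ρ(x) e^{-sx} dx` satisfies `L_ρ(s) = -ζ'(s+α) / ((s+α)·ζ(s+α))`. -/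
theorem stmt15 (α : ℝ) (hα : 1 < α)
    (ψ : ℝ → ℝ)
    (hψ : ∀ x : ℝ, ψ x = ∑ n ∈ Finset.Ico 1 ⌈x⌉₊, ArithmeticFunction.vonMangoldt n)
    (ρ : ℝ → ℝ) (hρ : ∀ x : ℝ, ρ x = ψ (Real.exp x) * Real.exp (-α * x))
    (s : ℂ) (hs : 0 < s.re) :
    (∫ x in Set.Ici (0 : ℝ), (ρ x : ℂ) * Complex.exp (-s * x)) =
      -deriv riemannZeta (s + α) / ((s + α) * riemannZeta (s + α)) := by
  have hσ : 1 < (s + α).re := by simp only [Complex.add_re, Complex.ofReal_re]; linarith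
  have hρs (x : ℝ) : (ρ x : ℂ) * Complex.exp (-s * x) =
      (∑ n ∈ Finset.Ico 1 ⌈Real.exp x⌉₊, (ArithmeticFunction.vonMangoldt n : ℂ)) *
        Complex.exp (-(s + α) * x) := by
    rw [hρ, hψ, Complex.ofReal_mul, Complex.ofReal_exp, mul_assoc, ← Complex.exp_add]
    push_cast
    ring_nf
  simp_rw [hρs]
  rw [LSeries.integral_summatory_mul_cexp (by linarith)
      (ArithmeticFunction.LSeriesSummable_vonMangoldt hσ),
    ArithmeticFunction.LSeries_vonMangoldt_eq_deriv_riemannZeta_div hσ, div_div, mul_comm]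
end
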